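/- Let $P$ be a $\pi$-reversible Markov kernel on a measurable space, with conductance profile $\Phi_P(v) := \inf\{(\pi\otimes P)(A\times A^\complement)/\pi(A) : \pi(A)\le v\}$ and spectral profile $\Lambda_P(v) := \inf\{\lambda_P(A): \pi(A)\le v\}$ where $\lambda_P(A) = \inf\{\mathcal{E}(P,g)/\mathrm{Var}_\pi(g) : g \ge 0, \mathrm{supp}\,g \subseteq A, g \text{ non-constant}\}$. Then for $0 < v \le 1/2$, $\Lambda_P(v) \ge \frac{1}{2}\Phi_P(v)^2$. -/

import Mathlib

/-! For `g` supported in a set of measure at most `v`, apply the co-area formula to `h = g²`.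
Each level set `{h > t}`, `t > 0`, lies in the support of `g`, so its boundary flow
`(π ⊗ P)({h > t} × {h ≤ t})` is at least `Φ(v) π(h > t)`; integrating in `t`, and using
reversibility to count both crossing directions, gives `2 Φ ∫ g² ≤ ∫∫ |g(y)² - g(x)²|`.
Cauchy–Schwarz with `g(y)² - g(x)² = (g(y) - g(x)) (g(y) + g(x))`, together with
`∫∫ (g(y) + g(x))² ≤ 4 ∫ g²` (both marginals of `π ⊗ P` are `π`), bounds the right side by
`(2 𝓔(g))^½ (4 ∫ g²)^½`. Hence `Φ² ∫ g² ≤ 2 𝓔(g)`, and `Var(g) ≤ ∫ g²`.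
The estimates are carried out with `ℝ≥0∞`-valued integrals, so that integrability only enters
in the final conversion to `𝓔` and `Var`. -/

open MeasureTheory ProbabilityTheory Real
open scoped ENNReal

noncomputable section

variable {E : Type*} [MeasurableSpace E]

/-- The Dirichlet form `𝓔(P,g) = ½ ∫∫ (g(y)-g(x))² P(x,dy) π(dx)`. -/
def dirichletForm (pm : Measure E) (P : Kernel E E) (g : E → ℝ) : ℝ :=
  (1 / 2) * ∫ x, ∫ y, (g y - g x) ^ 2 ∂(P x) ∂pm

/-- The variance of `g` under `pm`. -/
def var' (pm : Measure E) (g : E → ℝ) : ℝ :=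
  ∫ x, (g x - ∫ y, g y ∂pm) ^ 2 ∂pm

/-- The conductance profile `Φ_P(v)`. -/
def condProfile (pm : Measure E) (P : Kernel E E) (v : ℝ) : ℝ :=
  sInf {r | ∃ A : Set E, MeasurableSet A ∧ 0 < pm A ∧ (pm A).toReal ≤ v ∧
    r = (∫⁻ x in A, P x Aᶜ ∂pm).toReal / (pm A).toReal}

/-- The spectral profile `Λ_P(v)`, the infimum over sets `A` with `π(A) ≤ v` of the
infimum of `𝓔(P,g)/Var_π(g)` over nonnegative, non-constant `g` supported in `A`. -/
def specProfile (pm : Measure E) (P : Kernel E E) (v : ℝ) : ℝ :=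
  sInf {r | ∃ A : Set E, MeasurableSet A ∧ (pm A).toReal ≤ v ∧
    ∃ g : E → ℝ, Measurable g ∧ MemLp g 2 pm ∧ (∀ x, 0 ≤ g x) ∧
      Function.support g ⊆ A ∧ 0 < var' pm g ∧
      r = dirichletForm pm P g / var' pm g}

lemma lintegral_ofReal_sub_eq_lintegral_measure {X : Type*} [MeasurableSpace X]
    (ν : Measure X) [SFinite ν] {a b : X → ℝ} (ha : Measurable a) (hb : Measurable b) :
    ∫⁻ x, ENNReal.ofReal (b x - a x) ∂ν = ∫⁻ t, ν {x | a x ≤ t ∧ t < b x} := by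
  have hS : MeasurableSet {p : X × ℝ | a p.1 ≤ p.2 ∧ p.2 < b p.1} :=
    (measurableSet_le (ha.comp measurable_fst) measurable_snd).inter
      (measurableSet_lt measurable_snd (hb.comp measurable_fst))
  calc ∫⁻ x, ENNReal.ofReal (b x - a x) ∂ν = ∫⁻ x, volume (Set.Ico (a x) (b x)) ∂ν := by
        simp only [Real.volume_Ico]
    _ = ν.prod volume {p : X × ℝ | a p.1 ≤ p.2 ∧ p.2 < b p.1} := (Measure.prod_apply hS).symm
    _ = ∫⁻ t, ν {x | a x ≤ t ∧ t < b x} := Measure.prod_apply_symm hS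

lemma sq_lintegral_ofReal_abs_mul_le {X : Type*} [MeasurableSpace X] (μ : Measure X)
    {u w : X → ℝ} (hu : Measurable u) (hw : Measurable w) :
    (∫⁻ x, ENNReal.ofReal |u x * w x| ∂μ) ^ 2 ≤
      (∫⁻ x, ENNReal.ofReal (u x ^ 2) ∂μ) * ∫⁻ x, ENNReal.ofReal (w x ^ 2) ∂μ := by
  have hsq : ∀ r : ℝ, ENNReal.ofReal (r ^ 2) = ‖r‖ₑ ^ (2 : ℝ) := fun r => by
    rw [Real.enorm_eq_ofReal_abs, ENNReal.rpow_two, ← ENNReal.ofReal_pow (abs_nonneg r), sq_abs]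
  have hholder := ENNReal.lintegral_mul_le_Lp_mul_Lq μ Real.HolderConjugate.two_two
    hu.enorm.aemeasurable hw.enorm.aemeasurable
  simp only [Pi.mul_apply, ← enorm_mul, ← hsq] at hholder
  have hhalf : ∀ a : ℝ≥0∞, (a ^ (1 / 2 : ℝ)) ^ 2 = a := fun a => by
    rw [← ENNReal.rpow_natCast, ← ENNReal.rpow_mul]; norm_num
  calc (∫⁻ x, ENNReal.ofReal |u x * w x| ∂μ) ^ 2
      ≤ ((∫⁻ x, ENNReal.ofReal (u x ^ 2) ∂μ) ^ (1 / 2 : ℝ) *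
          (∫⁻ x, ENNReal.ofReal (w x ^ 2) ∂μ) ^ (1 / 2 : ℝ)) ^ 2 := by
        simp only [← Real.enorm_eq_ofReal_abs]
        gcongr
    _ = _ := by rw [mul_pow, hhalf, hhalf]

lemma lintegral_compProd_fst {α β : Type*} [MeasurableSpace α] [MeasurableSpace β]
    (μ : Measure α) [SFinite μ] (κ : Kernel α β) [IsMarkovKernel κ] {f : α → ℝ≥0∞}
    (hf : Measurable f) : ∫⁻ z, f z.1 ∂(μ ⊗ₘ κ) = ∫⁻ x, f x ∂μ := by
  conv_rhs => rw [← Measure.fst_compProd μ κ, Measure.fst, lintegral_map hf measurable_fst]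

namespace ProbabilityTheory.Kernel

variable {pm : Measure E} {P : Kernel E E}

lemma Invariant.lintegral_compProd_snd [SFinite pm] [IsSFiniteKernel P] (hP : P.Invariant pm)
    {f : E → ℝ≥0∞} (hf : Measurable f) : ∫⁻ z, f z.2 ∂(pm ⊗ₘ P) = ∫⁻ x, f x ∂pm := by
  conv_rhs => rw [← hP.def, ← Measure.snd_compProd pm P, Measure.snd,
    MeasureTheory.lintegral_map hf measurable_snd]

lemma Invariant.lintegral_ofReal_sq_le [SFinite pm] [IsMarkovKernel P] (hP : P.Invariant pm)
    {g : E → ℝ} (hg : Measurable g) {F : E × E → ℝ}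
    (hF : ∀ z, F z ^ 2 ≤ 2 * g z.1 ^ 2 + 2 * g z.2 ^ 2) :
    ∫⁻ z, ENNReal.ofReal (F z ^ 2) ∂(pm ⊗ₘ P) ≤ 4 * ∫⁻ x, ENNReal.ofReal (g x ^ 2) ∂pm := by
  have hg2 : Measurable fun x => ENNReal.ofReal (g x ^ 2) := by fun_prop
  calc ∫⁻ z, ENNReal.ofReal (F z ^ 2) ∂(pm ⊗ₘ P)
      ≤ ∫⁻ z, (2 * ENNReal.ofReal (g z.1 ^ 2) + 2 * ENNReal.ofReal (g z.2 ^ 2)) ∂(pm ⊗ₘ P) := by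
        refine lintegral_mono fun z => (ENNReal.ofReal_le_ofReal (hF z)).trans_eq ?_
        rw [ENNReal.ofReal_add (by positivity) (by positivity),
          ENNReal.ofReal_mul zero_le_two, ENNReal.ofReal_mul zero_le_two, ENNReal.ofReal_ofNat]
    _ = 4 * ∫⁻ x, ENNReal.ofReal (g x ^ 2) ∂pm := by
        rw [lintegral_add_left (by fun_prop), lintegral_const_mul _ (by fun_prop),
          lintegral_const_mul _ (by fun_prop), lintegral_compProd_fst pm P hg2,
          hP.lintegral_compProd_snd hg2, ← add_mul]
        norm_num

lemma IsReversible.compProd_prod_comm [SFinite pm] [IsSFiniteKernel P] (hP : P.IsReversible pm)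
    {A B : Set E} (hA : MeasurableSet A) (hB : MeasurableSet B) :
    (pm ⊗ₘ P) (A ×ˢ B) = (pm ⊗ₘ P) (B ×ˢ A) := by
  rw [Measure.compProd_apply_prod hA hB, Measure.compProd_apply_prod hB hA, hP hA hB]

lemma IsReversible.lintegral_ofReal_abs_sub [SFinite pm] [IsSFiniteKernel P]
    (hP : P.IsReversible pm) {h : E → ℝ} (hh : Measurable h) :
    ∫⁻ z, ENNReal.ofReal |h z.2 - h z.1| ∂(pm ⊗ₘ P) =
      2 * ∫⁻ t, ∫⁻ x in {x | t < h x}, P x {x | t < h x}ᶜ ∂pm := by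
  have hlevel : ∀ t, MeasurableSet {x | t < h x} := fun t => measurableSet_lt measurable_const hh
  have hup : ∀ t, {z : E × E | h z.1 ≤ t ∧ t < h z.2} = {x | t < h x}ᶜ ×ˢ {x | t < h x} := by
    intro t; ext z; simp
  have hdown : ∀ t, {z : E × E | h z.2 ≤ t ∧ t < h z.1} = {x | t < h x} ×ˢ {x | t < h x}ᶜ := by
    intro t; ext z; simp [and_comm]
  have habs : ∀ u : ℝ, ENNReal.ofReal |u| = ENNReal.ofReal u + ENNReal.ofReal (-u) := by
    intro u
    rcases le_total 0 u with hu | hu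
    · rw [abs_of_nonneg hu, ENNReal.ofReal_of_nonpos (neg_nonpos.mpr hu), add_zero]
    · rw [abs_of_nonpos hu, ENNReal.ofReal_of_nonpos hu, zero_add]
  simp_rw [habs, neg_sub]
  rw [lintegral_add_left (by fun_prop),
    lintegral_ofReal_sub_eq_lintegral_measure (pm ⊗ₘ P) (a := fun z => h z.1)
      (b := fun z => h z.2) (hh.comp measurable_fst) (hh.comp measurable_snd),
    lintegral_ofReal_sub_eq_lintegral_measure (pm ⊗ₘ P) (a := fun z => h z.2)
      (b := fun z => h z.1) (hh.comp measurable_snd) (hh.comp measurable_fst)]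
  simp_rw [hup, hdown, hP.compProd_prod_comm (hlevel _).compl (hlevel _),
    Measure.compProd_apply_prod (hlevel _) (hlevel _).compl, two_mul]

end ProbabilityTheory.Kernel

lemma condProfile_nonneg (pm : Measure E) (P : Kernel E E) (v : ℝ) : 0 ≤ condProfile pm P v :=
  Real.sInf_nonneg (by rintro r ⟨A, -, -, -, rfl⟩; positivity)

lemma dirichletForm_nonneg (pm : Measure E) (P : Kernel E E) (g : E → ℝ) :
    0 ≤ dirichletForm pm P g :=
  mul_nonneg (by norm_num) (integral_nonneg fun _ => integral_nonneg fun _ => sq_nonneg _)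

lemma specProfile_nonneg (pm : Measure E) (P : Kernel E E) (v : ℝ) : 0 ≤ specProfile pm P v :=
  Real.sInf_nonneg (by
    rintro r ⟨A, -, -, g, -, -, -, -, hvar, rfl⟩
    exact div_nonneg (dirichletForm_nonneg pm P g) hvar.le)

section Profiles

variable {pm : Measure E} {P : Kernel E E}

lemma ofReal_condProfile_mul_le [IsFiniteMeasure pm] [IsMarkovKernel P] {v : ℝ} {B : Set E}
    (hB : MeasurableSet B) (hBv : (pm B).toReal ≤ v) :
    ENNReal.ofReal (condProfile pm P v) * pm B ≤ ∫⁻ x in B, P x Bᶜ ∂pm := by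
  rcases eq_or_ne (pm B) 0 with hB0 | hB0
  · simp [hB0]
  have hflow_le : ∫⁻ x in B, P x Bᶜ ∂pm ≤ pm B :=
    (setLIntegral_mono' hB fun x _ => prob_le_one).trans_eq (setLIntegral_one B)
  have hflow_ne_top : ∫⁻ x in B, P x Bᶜ ∂pm ≠ ∞ :=
    ne_top_of_le_ne_top (measure_ne_top pm B) hflow_le
  have hΦ : condProfile pm P v ≤ (∫⁻ x in B, P x Bᶜ ∂pm).toReal / (pm B).toReal :=
    csInf_le ⟨0, by rintro r ⟨A, -, -, -, rfl⟩; positivity⟩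
      ⟨B, hB, pos_iff_ne_zero.2 hB0, hBv, rfl⟩
  rw [le_div_iff₀ (ENNReal.toReal_pos hB0 (measure_ne_top pm B))] at hΦ
  calc ENNReal.ofReal (condProfile pm P v) * pm B
      = ENNReal.ofReal (condProfile pm P v * (pm B).toReal) := by
        rw [ENNReal.ofReal_mul (condProfile_nonneg pm P v),
          ENNReal.ofReal_toReal (measure_ne_top pm B)]
    _ ≤ ∫⁻ x in B, P x Bᶜ ∂pm := ENNReal.ofReal_le_of_le_toReal hΦ

lemma ofReal_condProfile_mul_lintegral_le [IsFiniteMeasure pm] [IsMarkovKernel P] {v : ℝ}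
    {A : Set E} (hAv : (pm A).toReal ≤ v) {h : E → ℝ} (hh : Measurable h) (hh0 : 0 ≤ h)
    (hsupp : Function.support h ⊆ A) :
    ENNReal.ofReal (condProfile pm P v) * ∫⁻ x, ENNReal.ofReal (h x) ∂pm ≤
      ∫⁻ t, ∫⁻ x in {x | t < h x}, P x {x | t < h x}ᶜ ∂pm := by
  rw [lintegral_eq_lintegral_meas_lt pm (ae_of_all _ hh0) hh.aemeasurable,
    ← lintegral_const_mul' _ _ ENNReal.ofReal_ne_top]
  refine (setLIntegral_mono' measurableSet_Ioi fun t ht => ?_).trans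
    (setLIntegral_le_lintegral _ _)
  refine ofReal_condProfile_mul_le (measurableSet_lt measurable_const hh) (le_trans ?_ hAv)
  exact ENNReal.toReal_mono (measure_ne_top _ _)
    (measure_mono fun x hx => hsupp (lt_trans (Set.mem_Ioi.mp ht) hx).ne')

lemma ofReal_condProfile_sq_mul_lintegral_le [IsFiniteMeasure pm] [IsMarkovKernel P]
    (hP : P.IsReversible pm) {v : ℝ} {A : Set E} (hAv : (pm A).toReal ≤ v) {g : E → ℝ}
    (hg : Measurable g) (hgL2 : MemLp g 2 pm) (hsupp : Function.support g ⊆ A) :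
    ENNReal.ofReal (condProfile pm P v) ^ 2 * ∫⁻ x, ENNReal.ofReal (g x ^ 2) ∂pm ≤
      ∫⁻ z, ENNReal.ofReal ((g z.2 - g z.1) ^ 2) ∂(pm ⊗ₘ P) := by
  set Φ := ENNReal.ofReal (condProfile pm P v)
  set I := ∫⁻ x, ENNReal.ofReal (g x ^ 2) ∂pm
  set D := ∫⁻ z, ENNReal.ofReal ((g z.2 - g z.1) ^ 2) ∂(pm ⊗ₘ P)
  set N := ∫⁻ z, ENNReal.ofReal |g z.2 ^ 2 - g z.1 ^ 2| ∂(pm ⊗ₘ P) with hN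
  have hI : I ≠ ∞ := hgL2.integrable_sq.lintegral_lt_top.ne
  have hlower : 2 * Φ * I ≤ N := by
    rw [hN, hP.lintegral_ofReal_abs_sub (h := fun x => g x ^ 2) (hg.pow_const 2), mul_assoc]
    gcongr
    exact ofReal_condProfile_mul_lintegral_le hAv (hg.pow_const 2) (fun x => sq_nonneg (g x))
      ((Function.support_pow g two_ne_zero).trans_subset hsupp)
  have hupper : N ^ 2 ≤ D * (4 * I) := by
    have hfactor : ∀ z : E × E, g z.2 ^ 2 - g z.1 ^ 2 = (g z.2 - g z.1) * (g z.2 + g z.1) :=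
      fun z => by ring
    calc N ^ 2 ≤ D * ∫⁻ z, ENNReal.ofReal ((g z.2 + g z.1) ^ 2) ∂(pm ⊗ₘ P) := by
          simp only [hN, hfactor]
          exact sq_lintegral_ofReal_abs_mul_le _ (by fun_prop) (by fun_prop)
      _ ≤ D * (4 * I) := by
          gcongr
          exact hP.invariant.lintegral_ofReal_sq_le hg fun z => by
            nlinarith [sq_nonneg (g z.2 - g z.1)]
  rcases eq_or_ne I 0 with hI0 | hI0
  · simp [hI0]
  rw [← ENNReal.mul_le_mul_iff_left (mul_ne_zero four_ne_zero hI0)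
    (ENNReal.mul_ne_top (by norm_num) hI)]
  calc Φ ^ 2 * I * (4 * I) = (2 * Φ * I) ^ 2 := by ring
    _ ≤ N ^ 2 := by gcongr
    _ ≤ D * (4 * I) := hupper

lemma dirichletForm_eq_half_toReal_lintegral [SFinite pm] [IsSFiniteKernel P] {g : E → ℝ}
    (hg : Measurable g) (hD : ∫⁻ z, ENNReal.ofReal ((g z.2 - g z.1) ^ 2) ∂(pm ⊗ₘ P) ≠ ∞) :
    dirichletForm pm P g =
      1 / 2 * (∫⁻ z, ENNReal.ofReal ((g z.2 - g z.1) ^ 2) ∂(pm ⊗ₘ P)).toReal := by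
  have hmeas : Measurable fun z : E × E => ENNReal.ofReal ((g z.2 - g z.1) ^ 2) := by fun_prop
  rw [Measure.lintegral_compProd hmeas] at hD ⊢
  have hinner : Measurable fun x => ∫⁻ y, ENNReal.ofReal ((g y - g x) ^ 2) ∂P x :=
    hmeas.lintegral_kernel_prod_right
  rw [dirichletForm, ← integral_toReal hinner.aemeasurable (ae_lt_top hinner hD)]
  congr 1
  refine integral_congr_ae (ae_of_all _ fun x => ?_)
  exact integral_eq_lintegral_of_nonneg_ae (ae_of_all _ fun y => sq_nonneg _) (by fun_prop)

lemma var'_le_toReal_lintegral_sq [IsProbabilityMeasure pm] {g : E → ℝ} (hg : Measurable g) :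
    var' pm g ≤ (∫⁻ x, ENNReal.ofReal (g x ^ 2) ∂pm).toReal := by
  rw [var', ← variance_eq_integral hg.aemeasurable,
    ← integral_eq_lintegral_of_nonneg_ae (ae_of_all _ fun x => sq_nonneg _) (by fun_prop)]
  exact variance_le_expectation_sq hg.aestronglyMeasurable

lemma var'_indicator_one [IsProbabilityMeasure pm] {A : Set E} (hA : MeasurableSet A) :
    var' pm (A.indicator 1) = (pm A).toReal * (1 - (pm A).toReal) := by
  have hsq : (A.indicator 1 : E → ℝ) ^ 2 = A.indicator 1 := by
    ext x; by_cases hx : x ∈ A <;> simp [hx]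
  rw [var', ← variance_eq_integral (measurable_one.indicator hA).aemeasurable,
    variance_eq_sub (X := A.indicator 1) ((memLp_const 1).indicator hA), hsq,
    integral_indicator_one hA, Measure.real]
  ring

theorem half_condProfile_sq_le_dirichletForm_div_var' [IsProbabilityMeasure pm]
    [IsMarkovKernel P] (hP : P.IsReversible pm) {v : ℝ} {A : Set E} (hAv : (pm A).toReal ≤ v)
    {g : E → ℝ} (hg : Measurable g) (hgL2 : MemLp g 2 pm) (hsupp : Function.support g ⊆ A)
    (hvar : 0 < var' pm g) :
    1 / 2 * condProfile pm P v ^ 2 ≤ dirichletForm pm P g / var' pm g := by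
  have hI : ∫⁻ x, ENNReal.ofReal (g x ^ 2) ∂pm ≠ ∞ := hgL2.integrable_sq.lintegral_lt_top.ne
  have hD : ∫⁻ z, ENNReal.ofReal ((g z.2 - g z.1) ^ 2) ∂(pm ⊗ₘ P) ≠ ∞ :=
    ne_top_of_le_ne_top (ENNReal.mul_ne_top (by norm_num) hI)
      (hP.invariant.lintegral_ofReal_sq_le hg fun z => by nlinarith [sq_nonneg (g z.2 + g z.1)])
  have hkey := ENNReal.toReal_mono hD
    (ofReal_condProfile_sq_mul_lintegral_le hP hAv hg hgL2 hsupp)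
  rw [ENNReal.toReal_mul, ENNReal.toReal_pow, ENNReal.toReal_ofReal (condProfile_nonneg pm P v)]
    at hkey
  rw [dirichletForm_eq_half_toReal_lintegral hg hD, le_div_iff₀ hvar]
  nlinarith [mul_le_mul_of_nonneg_left (var'_le_toReal_lintegral_sq (pm := pm) hg)
    (sq_nonneg (condProfile pm P v))]

end Profiles

theorem stmt5_general (pm : Measure E) [IsProbabilityMeasure pm]
    (P : Kernel E E) [IsMarkovKernel P]
    (hrev : ∀ A B : Set E, MeasurableSet A → MeasurableSet B →
      ∫⁻ x in A, P x B ∂pm = ∫⁻ x in B, P x A ∂pm)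
    (v : ℝ) (hv : v ≤ 1 / 2) :
    (1 / 2) * condProfile pm P v ^ 2 ≤ specProfile pm P v := by
  by_cases hcond : ∃ A : Set E, MeasurableSet A ∧ 0 < pm A ∧ (pm A).toReal ≤ v
  · obtain ⟨A, hA, hA0, hAv⟩ := hcond
    have hvar : 0 < var' pm (A.indicator 1) := by
      have hApos := ENNReal.toReal_pos hA0.ne' (measure_ne_top pm A)
      rw [var'_indicator_one hA]
      exact mul_pos hApos (by linarith)
    refine le_csInf ⟨_, A, hA, hAv, A.indicator 1, measurable_one.indicator hA,
      (memLp_const 1).indicator hA, Set.indicator_nonneg (fun _ _ => zero_le_one),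
      Set.support_indicator_subset, hvar, rfl⟩ ?_
    rintro r ⟨B, -, hBv, g, hg, hgL2, -, hsupp, hgvar, rfl⟩
    exact half_condProfile_sq_le_dirichletForm_div_var' hrev hBv hg hgL2 hsupp hgvar
  · have hΦ : condProfile pm P v = 0 := by
      rw [condProfile, ← Real.sInf_empty]
      congr 1
      exact Set.eq_empty_of_forall_notMem fun r ⟨A, hA, hA0, hAv, _⟩ => hcond ⟨A, hA, hA0, hAv⟩
    rw [hΦ]
    simpa using specProfile_nonneg pm P v

/-- Cheeger-type bound: the spectral profile dominates half the squared conductance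
profile, for `0 < v ≤ 1/2`. -/
theorem stmt5 (pm : Measure E) [IsProbabilityMeasure pm]
    (P : Kernel E E) [IsMarkovKernel P]
    (hrev : ∀ A B : Set E, MeasurableSet A → MeasurableSet B →
      ∫⁻ x in A, P x B ∂pm = ∫⁻ x in B, P x A ∂pm)
    (v : ℝ) (hv0 : 0 < v) (hv : v ≤ 1 / 2) :
    (1 / 2) * condProfile pm P v ^ 2 ≤ specProfile pm P v :=
  stmt5_general pm P hrev v hv
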